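/- Decomposition lemma for visibly BPA: for vBPA processes Xα and X'α' (with X, X' single stack symbols and α, α' stack contents), Xα ∼ X'α' if and only if (i) X ∼ X', and (ii) if X →* ε or X' →* ε then α ∼ α'. Here ∼ denotes bisimilarity on the LTS generated by the vBPA. -/
import Mathlib


inductive ActKind : Type
  | call | ret | int

/-- Visibility condition for a BPA (single control state): the length of the pushed
string is `2` for calls, `0` for returns, `1` for internals. -/
def VisiblyConditionBPA {Γ A : Type*} (k : A → ActKind)
    (Δ : Set (Γ × A × List Γ)) : Prop :=
  ∀ r ∈ Δ, r.2.2.length = (match k r.2.1 with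
    | .call => 2 | .ret => 0 | .int => 1)

/-- One-step transition of a BPA on stacks. -/
def BPAStep {Γ A : Type*} (Δ : Set (Γ × A × List Γ)) :
    List Γ → A → List Γ → Prop :=
  fun s a s' => ∃ X γ α, (X, a, α) ∈ Δ ∧ s = X :: γ ∧ s' = α ++ γ

def IsSimulation {S A : Type*} (tr : S → A → S → Prop) (R : S → S → Prop) : Prop :=
  ∀ s t, R s t → ∀ a s', tr s a s' → ∃ t', tr t a t' ∧ R s' t'

def IsBisimulation {S A : Type*} (tr : S → A → S → Prop) (R : S → S → Prop) : Prop :=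
  IsSimulation tr R ∧ ∀ s t, R s t ↔ R t s

def Bisimilar {S A : Type*} (tr : S → A → S → Prop) (s t : S) : Prop :=
  ∃ R, IsBisimulation tr R ∧ R s t

/-- Reachability via any finite sequence of transitions. -/
def Reaches {S A : Type*} (tr : S → A → S → Prop) : S → S → Prop :=
  Relation.ReflTransGen (fun s s' => ∃ a, tr s a s')

namespace VBPAAux

lemma bisim_symm {S B : Type*} {tr : S → B → S → Prop} {s t : S}
    (h : Bisimilar tr s t) : Bisimilar tr t s := by
  obtain ⟨R, hR, hst⟩ := h
  exact ⟨R, hR, (hR.2 s t).mp hst⟩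

lemma bisim_step {S B : Type*} {tr : S → B → S → Prop} {s t : S}
    (h : Bisimilar tr s t) {a : B} {s' : S} (hs : tr s a s') :
    ∃ t', tr t a t' ∧ Bisimilar tr s' t' := by
  obtain ⟨R, hR, hst⟩ := h
  obtain ⟨t', ht, hR'⟩ := hR.1 s t hst a s' hs
  exact ⟨t', ht, R, hR, hR'⟩

variable {Γ A : Type*} {k : A → ActKind} {Δ : Set (Γ × A × List Γ)}

/-- weight of an action -/
def wgt (k : A → ActKind) (a : A) : ℕ :=
  match k a with | .call => 2 | .ret => 0 | .int => 1

lemma step_len (hvis : VisiblyConditionBPA k Δ) {s : List Γ} {a : A} {s' : List Γ}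
    (h : BPAStep Δ s a s') : s'.length + 1 = s.length + wgt k a := by
  obtain ⟨X, γ, α, hmem, rfl, rfl⟩ := h
  have h1 := hvis _ hmem
  simp only at h1
  have : α.length = wgt k a := h1
  simp [List.length_append, this]
  omega

lemma step_append {s : List Γ} {a : A} {s' : List Γ} (ρ : List Γ)
    (h : BPAStep Δ s a s') : BPAStep Δ (s ++ ρ) a (s' ++ ρ) := by
  obtain ⟨X, γ, α, hmem, rfl, rfl⟩ := h
  exact ⟨X, γ ++ ρ, α, hmem, by simp, by simp⟩

lemma step_decomp {β ρ : List Γ} {a : A} {s' : List Γ} (hβ : β ≠ [])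
    (h : BPAStep Δ (β ++ ρ) a s') :
    ∃ β₁, BPAStep Δ β a β₁ ∧ s' = β₁ ++ ρ := by
  obtain ⟨Z, γ', δ, hmem, heq, rfl⟩ := h
  cases β with
  | nil => exact absurd rfl hβ
  | cons Y γ =>
    simp only [List.cons_append, List.cons.injEq] at heq
    obtain ⟨rfl, rfl⟩ := heq
    exact ⟨δ ++ γ, ⟨Y, γ, δ, hmem, rfl, rfl⟩, by simp⟩

lemma step_ne_nil {s : List Γ} {a : A} {s' : List Γ} (h : BPAStep Δ s a s') :
    s ≠ [] := by
  obtain ⟨X, γ, α, hmem, rfl, rfl⟩ := h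
  simp

/-- Extracting the head: from `Xα ∼ X'α'` derive `X ∼ X'`. -/
lemma extract_head (hvis : VisiblyConditionBPA k Δ) {X X' : Γ} {α α' : List Γ}
    (h : Bisimilar (BPAStep Δ) (X :: α) (X' :: α')) :
    Bisimilar (BPAStep Δ) [X] [X'] := by
  refine ⟨fun s t => s.length = t.length ∧
      (Bisimilar (BPAStep Δ) (s ++ α) (t ++ α') ∨
       Bisimilar (BPAStep Δ) (s ++ α') (t ++ α)), ⟨?_, ?_⟩, rfl, Or.inl h⟩
  · rintro s t ⟨hlen, hd⟩ a s' hs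
    have hsne : s ≠ [] := step_ne_nil hs
    have htne : t ≠ [] := by
      intro hnil
      apply hsne
      rw [← List.length_eq_zero_iff] at hnil ⊢
      omega
    rcases hd with h1 | h1
    · obtain ⟨u, hu, hb⟩ := bisim_step h1 (step_append α hs)
      obtain ⟨t₁, hstept, rfl⟩ := step_decomp htne hu
      have l1 := step_len hvis hs
      have l2 := step_len hvis hstept
      exact ⟨t₁, hstept, by omega, Or.inl hb⟩
    · obtain ⟨u, hu, hb⟩ := bisim_step h1 (step_append α' hs)
      obtain ⟨t₁, hstept, rfl⟩ := step_decomp htne hu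
      have l1 := step_len hvis hs
      have l2 := step_len hvis hstept
      exact ⟨t₁, hstept, by omega, Or.inr hb⟩
  · intro s t
    constructor
    · rintro ⟨hlen, h1 | h1⟩
      · exact ⟨hlen.symm, Or.inr (bisim_symm h1)⟩
      · exact ⟨hlen.symm, Or.inl (bisim_symm h1)⟩
    · rintro ⟨hlen, h1 | h1⟩
      · exact ⟨hlen.symm, Or.inr (bisim_symm h1)⟩
      · exact ⟨hlen.symm, Or.inl (bisim_symm h1)⟩

/-- If `β` can pop to the empty stack and `βσ ∼ γσ'` with `|β| = |γ|`, then `σ ∼ σ'`. -/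
lemma pop_suffix (hvis : VisiblyConditionBPA k Δ) {σ σ' : List Γ}
    {β : List Γ} (hr : Reaches (BPAStep Δ) β []) :
    ∀ γ : List Γ, β.length = γ.length →
      Bisimilar (BPAStep Δ) (β ++ σ) (γ ++ σ') → Bisimilar (BPAStep Δ) σ σ' := by
  induction hr using Relation.ReflTransGen.head_induction_on with
  | refl =>
    intro γ hlen h
    have : γ = [] := by
      rw [← List.length_eq_zero_iff]; simpa using hlen.symm
    subst this
    simpa using h
  | head hstep htail ih =>
    intro γ hlen h
    obtain ⟨a, hstep⟩ := hstep
    have hβne := step_ne_nil hstep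
    have hγne : γ ≠ [] := by
      intro hnil
      apply hβne
      rw [← List.length_eq_zero_iff] at hnil ⊢
      omega
    obtain ⟨u, hu, hb⟩ := bisim_step h (step_append σ hstep)
    obtain ⟨γ₂, hstepγ, rfl⟩ := step_decomp hγne hu
    have l1 := step_len hvis hstep
    have l2 := step_len hvis hstepγ
    exact ih γ₂ (by omega) hb

/-- Composition: from `X ∼ X'` and the conditional `α ∼ α'`, derive `Xα ∼ X'α'`. -/
lemma compose (hvis : VisiblyConditionBPA k Δ) {X X' : Γ} {α α' : List Γ}
    (hX : Bisimilar (BPAStep Δ) [X] [X'])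
    (hcond : Reaches (BPAStep Δ) [X] [] → Bisimilar (BPAStep Δ) α α') :
    Bisimilar (BPAStep Δ) (X :: α) (X' :: α') := by
  refine ⟨fun s t =>
      Bisimilar (BPAStep Δ) s t ∨
      ∃ β β', β ≠ [] ∧ β.length = β'.length ∧ Bisimilar (BPAStep Δ) β β' ∧
        Reaches (BPAStep Δ) [X] β ∧
        ((s = β ++ α ∧ t = β' ++ α') ∨ (s = β' ++ α' ∧ t = β ++ α)),
    ⟨?_, ?_⟩,
    Or.inr ⟨[X], [X'], by simp, rfl, hX, Relation.ReflTransGen.refl,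
      Or.inl ⟨rfl, rfl⟩⟩⟩
  · rintro s t (hb | ⟨β, β', hβne, hlen, hbis, hreach, (⟨rfl, rfl⟩ | ⟨rfl, rfl⟩)⟩) a s' hs
    · obtain ⟨t', ht, hb'⟩ := bisim_step hb hs
      exact ⟨t', ht, Or.inl hb'⟩
    · -- s = β ++ α, t = β' ++ α'
      obtain ⟨β₁, hstep, rfl⟩ := step_decomp hβne hs
      obtain ⟨β₁', hstep', hb₁⟩ := bisim_step hbis hstep
      have l1 := step_len hvis hstep
      have l2 := step_len hvis hstep'
      have hlen1 : β₁.length = β₁'.length := by omega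
      have hreach1 : Reaches (BPAStep Δ) [X] β₁ := hreach.tail ⟨a, hstep⟩
      refine ⟨β₁' ++ α', step_append α' hstep', ?_⟩
      by_cases hβ₁ : β₁ = []
      · subst hβ₁
        have : β₁' = [] := by rw [← List.length_eq_zero_iff, ← hlen1]; rfl
        subst this
        exact Or.inl (hcond hreach1)
      · exact Or.inr ⟨β₁, β₁', hβ₁, hlen1, hb₁, hreach1, Or.inl ⟨rfl, rfl⟩⟩
    · -- s = β' ++ α', t = β ++ α
      have hβ'ne : β' ≠ [] := by
        intro hnil
        apply hβne
        rw [← List.length_eq_zero_iff] at hnil ⊢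
        omega
      obtain ⟨β₁', hstep', rfl⟩ := step_decomp hβ'ne hs
      obtain ⟨β₁, hstep, hb₁⟩ := bisim_step (bisim_symm hbis) hstep'
      have l1 := step_len hvis hstep
      have l2 := step_len hvis hstep'
      have hlen1 : β₁.length = β₁'.length := by omega
      have hreach1 : Reaches (BPAStep Δ) [X] β₁ := hreach.tail ⟨a, hstep⟩
      refine ⟨β₁ ++ α, step_append α hstep, ?_⟩
      by_cases hβ₁ : β₁ = []
      · subst hβ₁
        have : β₁' = [] := by rw [← List.length_eq_zero_iff, ← hlen1]; rfl
        subst this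
        exact Or.inl (bisim_symm (hcond hreach1))
      · exact Or.inr ⟨β₁, β₁', hβ₁, hlen1, bisim_symm hb₁, hreach1, Or.inr ⟨rfl, rfl⟩⟩
  · intro s t
    constructor
    · rintro (hb | ⟨β, β', h1, h2, h3, h4, (h5 | h5)⟩)
      · exact Or.inl (bisim_symm hb)
      · exact Or.inr ⟨β, β', h1, h2, h3, h4, Or.inr ⟨h5.2, h5.1⟩⟩
      · exact Or.inr ⟨β, β', h1, h2, h3, h4, Or.inl ⟨h5.2, h5.1⟩⟩
    · rintro (hb | ⟨β, β', h1, h2, h3, h4, (h5 | h5)⟩)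
      · exact Or.inl (bisim_symm hb)
      · exact Or.inr ⟨β, β', h1, h2, h3, h4, Or.inr ⟨h5.2, h5.1⟩⟩
      · exact Or.inr ⟨β, β', h1, h2, h3, h4, Or.inl ⟨h5.2, h5.1⟩⟩

end VBPAAux

theorem vBPA_decomposition {Γ A : Type*} (k : A → ActKind)
    (Δ : Set (Γ × A × List Γ)) (hvis : VisiblyConditionBPA k Δ)
    (X X' : Γ) (α α' : List Γ) :
    Bisimilar (BPAStep Δ) (X :: α) (X' :: α') ↔
      (Bisimilar (BPAStep Δ) [X] [X'] ∧
        ((Reaches (BPAStep Δ) [X] [] ∨ Reaches (BPAStep Δ) [X'] []) →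
          Bisimilar (BPAStep Δ) α α')) := by
  constructor
  · intro h
    refine ⟨VBPAAux.extract_head hvis h, ?_⟩
    rintro (hre | hre)
    · exact VBPAAux.pop_suffix hvis (β := [X]) hre [X'] rfl h
    · exact VBPAAux.bisim_symm
        (VBPAAux.pop_suffix hvis (β := [X']) hre [X] rfl (VBPAAux.bisim_symm h))
  · rintro ⟨h1, h2⟩
    exact VBPAAux.compose hvis h1 (fun hr => h2 (Or.inl hr))
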